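/- Let P̃ = Z B Z^T be the matrix of a balanced assortative BTSBM (p_0 > p_1 > … > p_d ≥ 0) with K = 2^d communities of size m = n/K. Then for any two nodes u, v in different communities (c(u) ≠ c(v)), the squared Euclidean distance between the corresponding columns of P̃ satisfies ‖P̃_{·u} − P̃_{·v}‖_2² ≥ 2 m (p_0 − p_1)², with equality when c(u) and c(v) are sibling leaves (binary strings differing only in the last bit). Consequently min_{c(u) ≠ c(v)} ‖P̃_{·u} − P̃_{·v}‖_2² = 2 (n/K)(p_0 − p_1)², which equals 2 (n/K) ρ_n² (1 − a_1)² in the scaling parametrization (p_0, …, p_d) = ρ_n(1, a_1, …, a_d). -/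

import Mathlib

open Finset Matrix

namespace BTSBM

/-- 0-based index of the first coordinate where two binary strings differ. -/
noncomputable def firstDiff {d : ℕ} (x y : Fin d → Bool) : ℕ :=
  sInf {q : ℕ | ∃ h : q < d, x ⟨q, h⟩ ≠ y ⟨q, h⟩}

/-- The BTSBM community connection matrix `B`: off-diagonal entries are
`p (D x y)` where `D x y = d + 1 - s x y` and `s` is the 1-based first index of
disagreement, so that `D x y = d - firstDiff x y`; diagonal entries are `p 0`. -/
noncomputable def Bmat (d : ℕ) (p : ℕ → ℝ) :
    Matrix (Fin d → Bool) (Fin d → Bool) ℝ :=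
  Matrix.of fun x y => if x = y then p 0 else p (d - firstDiff x y)

/-- The membership matrix `Z`. -/
def Zmat (n d : ℕ) (c : Fin n → Fin d → Bool) : Matrix (Fin n) (Fin d → Bool) ℝ :=
  Matrix.of fun i x => if c i = x then 1 else 0

/-- `P̃ = Z B Zᵀ`. -/
noncomputable def Ptil (n d : ℕ) (p : ℕ → ℝ) (c : Fin n → Fin d → Bool) :
    Matrix (Fin n) (Fin n) ℝ :=
  Zmat n d c * Bmat d p * (Zmat n d c)ᵀ

/-- Every community has exactly `m` nodes. -/
def Balanced (n d m : ℕ) (c : Fin n → Fin d → Bool) : Prop :=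
  ∀ x : Fin d → Bool, (Finset.univ.filter fun i => c i = x).card = m

/-- The eigenvalue formulas `λ_{d,q}` of `B`. -/
noncomputable def lamB (d : ℕ) (p : ℕ → ℝ) (q : ℕ) : ℝ :=
  if q = 0 then p 0 + ∑ r ∈ Finset.Icc 1 d, 2 ^ (r - 1) * p r
  else p 0 + (∑ r ∈ Finset.Icc 1 (d - q), 2 ^ (r - 1) * p r) - 2 ^ (d - q) * p (d - q + 1)

lemma Ptil_apply (n d : ℕ) (p : ℕ → ℝ) (c : Fin n → Fin d → Bool) (i u : Fin n) :
    Ptil n d p c i u = Bmat d p (c i) (c u) := by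
  simp [Ptil, Matrix.mul_apply, Zmat, Matrix.transpose_apply, ite_mul, mul_ite,
    Finset.sum_ite_eq, Finset.sum_ite_eq']

lemma firstDiff_spec {d : ℕ} {x y : Fin d → Bool} (h : x ≠ y) :
    ∃ hlt : firstDiff x y < d, x ⟨firstDiff x y, hlt⟩ ≠ y ⟨firstDiff x y, hlt⟩ := by
  have hne : {q : ℕ | ∃ h : q < d, x ⟨q, h⟩ ≠ y ⟨q, h⟩}.Nonempty := by
    obtain ⟨r, hr⟩ := Function.ne_iff.mp h
    exact ⟨r, r.isLt, by simpa using hr⟩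
  exact Nat.sInf_mem hne

lemma firstDiff_min {d : ℕ} {x y : Fin d → Bool} {q : ℕ} (hq : q < firstDiff x y)
    (hqd : q < d) : x ⟨q, hqd⟩ = y ⟨q, hqd⟩ := by
  by_contra hc
  have : q ∈ {q : ℕ | ∃ h : q < d, x ⟨q, h⟩ ≠ y ⟨q, h⟩} := ⟨hqd, hc⟩
  exact absurd (Nat.sInf_le this) (not_le.mpr hq)

lemma firstDiff_symm {d : ℕ} (x y : Fin d → Bool) : firstDiff x y = firstDiff y x := by
  unfold firstDiff
  congr 1
  ext q
  exact ⟨fun ⟨h, hn⟩ => ⟨h, hn.symm⟩, fun ⟨h, hn⟩ => ⟨h, hn.symm⟩⟩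

lemma Bmat_symm (d : ℕ) (p : ℕ → ℝ) (x y : Fin d → Bool) :
    Bmat d p x y = Bmat d p y x := by
  unfold Bmat
  by_cases h : x = y
  · simp [h]
  · simp [h, Ne.symm h, firstDiff_symm x y]

lemma bool_eq_of_ne_of_ne : ∀ a b c : Bool, a ≠ b → c ≠ b → a = c := by decide

/-- antitonicity of p on [0,d] -/
lemma p_anti {d : ℕ} {p : ℕ → ℝ} (hassort : ∀ r < d, p (r + 1) < p r) :
    ∀ s ≤ d, ∀ r ≤ s, p s ≤ p r := by
  intro s
  induction s with
  | zero => intro _ r hr; interval_cases r; exact le_refl _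
  | succ k ih =>
    intro hk r hr
    rcases Nat.eq_or_lt_of_le hr with h | h
    · rw [h]
    · have h1 : p (k + 1) < p k := hassort k (by omega)
      have h2 : p k ≤ p r := ih (by omega) r (by omega)
      linarith

/-- Column sum reduces to community sum. -/
lemma sum_sq_eq (n d m : ℕ) (p : ℕ → ℝ) (c : Fin n → Fin d → Bool)
    (hbal : Balanced n d m c) (u v : Fin n) :
    ∑ i, (Ptil n d p c i u - Ptil n d p c i v) ^ 2
      = (m : ℝ) * ∑ x : Fin d → Bool, (Bmat d p x (c u) - Bmat d p x (c v)) ^ 2 := by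
  have h1 : ∀ i, (Ptil n d p c i u - Ptil n d p c i v) ^ 2
      = (fun x => (Bmat d p x (c u) - Bmat d p x (c v)) ^ 2) (c i) := by
    intro i; simp [Ptil_apply]
  calc ∑ i, (Ptil n d p c i u - Ptil n d p c i v) ^ 2
      = ∑ i, (fun x => (Bmat d p x (c u) - Bmat d p x (c v)) ^ 2) (c i) := by
        exact Finset.sum_congr rfl fun i _ => h1 i
    _ = ∑ x : Fin d → Bool, ∑ i ∈ Finset.univ.filter (fun i => c i = x),
          (fun x => (Bmat d p x (c u) - Bmat d p x (c v)) ^ 2) (c i) :=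
        (Finset.sum_fiberwise Finset.univ c _).symm
    _ = ∑ x : Fin d → Bool, (m : ℝ) * (Bmat d p x (c u) - Bmat d p x (c v)) ^ 2 := by
        refine Finset.sum_congr rfl fun x _ => ?_
        rw [Finset.sum_congr rfl (fun i hi => by
          simp only [Finset.mem_filter] at hi; rw [hi.2]),
          Finset.sum_const, hbal x, nsmul_eq_mul]
    _ = _ := by rw [← Finset.mul_sum]


/-- Lower bound for the community-level sum of squares. -/
lemma Bsum_lower {d : ℕ} (hd : 1 ≤ d) {p : ℕ → ℝ}
    (hassort : ∀ r < d, p (r + 1) < p r) {x₀ y₀ : Fin d → Bool} (hxy : x₀ ≠ y₀) :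
    2 * (p 0 - p 1) ^ 2 ≤ ∑ x : Fin d → Bool, (Bmat d p x x₀ - Bmat d p x y₀) ^ 2 := by
  obtain ⟨hlt, -⟩ := firstDiff_spec hxy
  set D := d - firstDiff x₀ y₀ with hD
  have hD1 : 1 ≤ D := by omega
  have hDd : D ≤ d := by omega
  have hpD : p D ≤ p 1 := p_anti hassort D hDd 1 hD1
  have hp01 : p 1 < p 0 := by simpa using hassort 0 (by omega)
  have hBx : Bmat d p x₀ x₀ = p 0 := by simp [Bmat]
  have hBy : Bmat d p y₀ y₀ = p 0 := by simp [Bmat]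
  have hBxy : Bmat d p x₀ y₀ = p D := by simp [Bmat, hxy, hD]
  have hByx : Bmat d p y₀ x₀ = p D := by rw [Bmat_symm]; exact hBxy
  have hsub : ∑ x ∈ ({x₀, y₀} : Finset (Fin d → Bool)), (Bmat d p x x₀ - Bmat d p x y₀) ^ 2
      ≤ ∑ x : Fin d → Bool, (Bmat d p x x₀ - Bmat d p x y₀) ^ 2 :=
    Finset.sum_le_sum_of_subset_of_nonneg (Finset.subset_univ _)
      (fun x _ _ => sq_nonneg _)
  rw [Finset.sum_pair hxy, hBx, hBxy, hByx, hBy] at hsub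
  nlinarith [sq_nonneg (p 0 - p D), sq_nonneg (p 0 - p 1)]

/-- For sibling leaves, `firstDiff x₀ y₀ = d - 1`. -/
lemma firstDiff_sibling {d : ℕ} (hd : 1 ≤ d) {x₀ y₀ : Fin d → Bool}
    (hsib : ∀ r : Fin d, (r : ℕ) ≠ d - 1 → x₀ r = y₀ r)
    (hlast : x₀ ⟨d - 1, by omega⟩ ≠ y₀ ⟨d - 1, by omega⟩) :
    firstDiff x₀ y₀ = d - 1 := by
  have hset : {q : ℕ | ∃ h : q < d, x₀ ⟨q, h⟩ ≠ y₀ ⟨q, h⟩} = {d - 1} := by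
    ext q
    constructor
    · rintro ⟨h, hn⟩
      by_contra hq
      exact hn (hsib ⟨q, h⟩ hq)
    · rintro rfl
      exact ⟨by omega, hlast⟩
  rw [firstDiff, hset, csInf_singleton]

/-- In the sibling case, other communities give equal distances to x₀ and y₀. -/
lemma firstDiff_le_sibling {d : ℕ} (hd : 1 ≤ d) {x₀ y₀ x : Fin d → Bool}
    (hsib : ∀ r : Fin d, (r : ℕ) ≠ d - 1 → x₀ r = y₀ r)
    (hlast : x₀ ⟨d - 1, by omega⟩ ≠ y₀ ⟨d - 1, by omega⟩)
    (hx : x ≠ x₀) (hy : x ≠ y₀) : firstDiff x y₀ ≤ firstDiff x x₀ := by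
  obtain ⟨h, hne⟩ := firstDiff_spec hx
  set q₀ := firstDiff x x₀ with hq₀def
  have hq₀ : q₀ ≠ d - 1 := by
    intro hq
    apply hy
    funext r
    rcases lt_trichotomy (r : ℕ) (d - 1) with hlt | heq | hgt
    · have h1 : x r = x₀ r := by
        have := firstDiff_min (x := x) (y := x₀) (q := (r : ℕ)) (by omega) r.isLt
        simpa using this
      rw [h1, hsib r (by omega)]
    · have hr : r = ⟨d - 1, by omega⟩ := Fin.ext heq
      rw [hr]
      have hx' : x ⟨d - 1, by omega⟩ ≠ x₀ ⟨d - 1, by omega⟩ := by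
        have : (⟨q₀, h⟩ : Fin d) = ⟨d - 1, by omega⟩ := Fin.ext (by simpa using hq)
        rwa [this] at hne
      exact bool_eq_of_ne_of_ne _ _ _ hx' hlast.symm
    · exact absurd r.isLt (by omega)
  have hq₀lt : q₀ < d - 1 := by omega
  have hxq : x ⟨q₀, h⟩ ≠ y₀ ⟨q₀, h⟩ := by
    rw [← hsib ⟨q₀, h⟩ (by simpa using hq₀)]
    exact hne
  exact Nat.sInf_le ⟨h, hxq⟩

/-- Equality for sibling leaves. -/
lemma Bsum_sibling {d : ℕ} (hd : 1 ≤ d) {p : ℕ → ℝ} {x₀ y₀ : Fin d → Bool}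
    (hsib : ∀ r : Fin d, (r : ℕ) ≠ d - 1 → x₀ r = y₀ r)
    (hlast : x₀ ⟨d - 1, by omega⟩ ≠ y₀ ⟨d - 1, by omega⟩) :
    ∑ x : Fin d → Bool, (Bmat d p x x₀ - Bmat d p x y₀) ^ 2 = 2 * (p 0 - p 1) ^ 2 := by
  have hxy : x₀ ≠ y₀ := fun h => hlast (by rw [h])
  have hfd : firstDiff x₀ y₀ = d - 1 := firstDiff_sibling hd hsib hlast
  have hBx : Bmat d p x₀ x₀ = p 0 := by simp [Bmat]
  have hBy : Bmat d p y₀ y₀ = p 0 := by simp [Bmat]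
  have hBxy : Bmat d p x₀ y₀ = p 1 := by
    simp only [Bmat, Matrix.of_apply, if_neg hxy, hfd]
    congr 1
    omega
  have hByx : Bmat d p y₀ x₀ = p 1 := by rw [Bmat_symm]; exact hBxy
  have hzero : ∀ x ∈ (Finset.univ : Finset (Fin d → Bool)),
      x ∉ ({x₀, y₀} : Finset (Fin d → Bool)) →
      (Bmat d p x x₀ - Bmat d p x y₀) ^ 2 = 0 := by
    intro x _ hx
    simp only [Finset.mem_insert, Finset.mem_singleton, not_or] at hx
    obtain ⟨hx1, hx2⟩ := hx
    have hsib' : ∀ r : Fin d, (r : ℕ) ≠ d - 1 → y₀ r = x₀ r := fun r hr => (hsib r hr).symm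
    have hfd_eq : firstDiff x x₀ = firstDiff x y₀ :=
      le_antisymm (firstDiff_le_sibling hd hsib' hlast.symm hx2 hx1)
        (firstDiff_le_sibling hd hsib hlast hx1 hx2)
    have : Bmat d p x x₀ = Bmat d p x y₀ := by
      simp only [Bmat, Matrix.of_apply, if_neg hx1, if_neg hx2, hfd_eq]
    rw [this]; ring
  rw [← Finset.sum_subset (Finset.subset_univ ({x₀, y₀} : Finset (Fin d → Bool))) hzero,
    Finset.sum_pair hxy, hBx, hBxy, hByx, hBy]
  ring


theorem statement12 (d m : ℕ) (hd : 1 ≤ d) (hm : 0 < m)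
    (p : ℕ → ℝ) (hp : ∀ r ≤ d, p r ∈ Set.Icc (0:ℝ) 1)
    -- assortative: p₀ > p₁ > … > p_d (≥ 0, by hp)
    (hassort : ∀ r < d, p (r + 1) < p r)
    (n : ℕ) (hn : n = 2 ^ d * m)
    (c : Fin n → Fin d → Bool) (hbal : Balanced n d m c) :
    -- lower bound for any two nodes in different communities
    (∀ u v : Fin n, c u ≠ c v →
        2 * (m : ℝ) * (p 0 - p 1) ^ 2
          ≤ ∑ i, (Ptil n d p c i u - Ptil n d p c i v) ^ 2)
    -- with equality when the labels are sibling leaves (differ only in the last bit)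
    ∧ (∀ u v : Fin n,
        (∀ r : Fin d, (r : ℕ) ≠ d - 1 → c u r = c v r) →
        c u ⟨d - 1, by omega⟩ ≠ c v ⟨d - 1, by omega⟩ →
        ∑ i, (Ptil n d p c i u - Ptil n d p c i v) ^ 2
          = 2 * (m : ℝ) * (p 0 - p 1) ^ 2)
    -- consequently, the minimum over pairs in different communities is 2(n/K)(p₀−p₁)²
    ∧ IsLeast {x : ℝ | ∃ u v : Fin n, c u ≠ c v
          ∧ x = ∑ i, (Ptil n d p c i u - Ptil n d p c i v) ^ 2}
        (2 * (m : ℝ) * (p 0 - p 1) ^ 2)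
    -- which equals 2(n/K) ρ_n² (1 − a₁)² in the scaling parametrization
    ∧ ∀ (ρ : ℝ) (a : ℕ → ℝ), (∀ r ≤ d, p r = ρ * a r) → a 0 = 1 →
        2 * (m : ℝ) * (p 0 - p 1) ^ 2 = 2 * (m : ℝ) * ρ ^ 2 * (1 - a 1) ^ 2 := by
  have key := fun u v => sum_sq_eq n d m p c hbal u v
  have part1 : ∀ u v : Fin n, c u ≠ c v →
      2 * (m : ℝ) * (p 0 - p 1) ^ 2
        ≤ ∑ i, (Ptil n d p c i u - Ptil n d p c i v) ^ 2 := by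
    intro u v huv
    rw [key u v]
    calc 2 * (m : ℝ) * (p 0 - p 1) ^ 2 = (m : ℝ) * (2 * (p 0 - p 1) ^ 2) := by ring
      _ ≤ _ := mul_le_mul_of_nonneg_left (Bsum_lower hd hassort huv) (Nat.cast_nonneg m)
  have part2 : ∀ u v : Fin n,
      (∀ r : Fin d, (r : ℕ) ≠ d - 1 → c u r = c v r) →
      c u ⟨d - 1, by omega⟩ ≠ c v ⟨d - 1, by omega⟩ →
      ∑ i, (Ptil n d p c i u - Ptil n d p c i v) ^ 2
        = 2 * (m : ℝ) * (p 0 - p 1) ^ 2 := by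
    intro u v hsib hlast
    rw [key u v, Bsum_sibling hd hsib hlast]
    ring
  refine ⟨part1, part2, ⟨?_, ?_⟩, ?_⟩
  · -- membership
    set x₀ : Fin d → Bool := fun _ => false with hx₀
    set y₀ : Fin d → Bool := fun r => decide ((r : ℕ) = d - 1) with hy₀
    have hexu : ∃ u : Fin n, c u = x₀ := by
      have h := hbal x₀
      have : (Finset.univ.filter fun i => c i = x₀).Nonempty :=
        Finset.card_pos.mp (by rw [h]; exact hm)
      obtain ⟨u, hu⟩ := this
      exact ⟨u, (Finset.mem_filter.mp hu).2⟩
    have hexv : ∃ v : Fin n, c v = y₀ := by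
      have h := hbal y₀
      have : (Finset.univ.filter fun i => c i = y₀).Nonempty :=
        Finset.card_pos.mp (by rw [h]; exact hm)
      obtain ⟨v, hv⟩ := this
      exact ⟨v, (Finset.mem_filter.mp hv).2⟩
    obtain ⟨u, hcu⟩ := hexu
    obtain ⟨v, hcv⟩ := hexv
    have hlast : c u ⟨d - 1, by omega⟩ ≠ c v ⟨d - 1, by omega⟩ := by
      rw [hcu, hcv]
      simp [hx₀, hy₀]
    refine ⟨u, v, ?_, ?_⟩
    · intro h
      exact hlast (by rw [h])
    · exact (part2 u v (fun r hr => by rw [hcu, hcv]; simp [hx₀, hy₀, hr]) hlast).symm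
  · -- lower bound
    rintro x ⟨u, v, huv, rfl⟩
    exact part1 u v huv
  · intro ρ a hpa ha0
    rw [hpa 0 (by omega), hpa 1 hd, ha0]
    ring


end BTSBM
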